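/- Let k ≥ 3 be an integer and let L be a graph with at least 2k+1 vertices. Suppose that every pair of non-adjacent vertices of L has at least 3k−1 common neighbors. Then for every choice of 2k+1 distinct vertices u_0, u_1, v_1, ..., u_k, v_k there exist k vertex-disjoint paths P_1, ..., P_k, each avoiding u_0, such that P_i joins u_i to v_i. -/

import Mathlib

open SimpleGraph

/-- `G` is `k`-linked: any `2k` distinct vertices, grouped into `k` pairs, can be joined
by `k` pairwise vertex-disjoint paths. -/
def Linked {V : Type} (G : SimpleGraph V) (k : ℕ) : Prop :=
  ∀ u v : Fin k → V,
    Function.Injective (Sum.elim u v) →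
    ∃ P : (i : Fin k) → G.Walk (u i) (v i),
      (∀ i, (P i).IsPath) ∧
      ∀ i j, i ≠ j → ∀ x ∈ (P i).support, x ∉ (P j).support

/-- `G` is `(2,…,2,1)`-knitted with `k` twos: any `k` pairs of vertices together with one
further vertex `u₀` (all distinct) can be linked by `k` pairwise vertex-disjoint paths,
each avoiding `u₀`. -/
def KnittedOne {V : Type} (G : SimpleGraph V) (k : ℕ) : Prop :=
  ∀ (u₀ : V) (u v : Fin k → V),
    Function.Injective (Sum.elim (Sum.elim u v) (fun _ : Unit => u₀)) →
    ∃ P : (i : Fin k) → G.Walk (u i) (v i),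
      (∀ i, (P i).IsPath) ∧
      (∀ i, u₀ ∉ (P i).support) ∧
      ∀ i j, i ≠ j → ∀ x ∈ (P i).support, x ∉ (P j).support

/-- `H` is a minor of `G`, witnessed by pairwise-disjoint nonempty connected branch sets. -/
def IsMinor {W V : Type} (H : SimpleGraph W) (G : SimpleGraph V) : Prop :=
  ∃ f : W → Set V,
    (∀ w, (f w).Nonempty) ∧
    (∀ w, (G.induce (f w)).Connected) ∧
    (Pairwise fun w w' => Disjoint (f w) (f w')) ∧
    (∀ ⦃w w'⦄, H.Adj w w' → ∃ a ∈ f w, ∃ b ∈ f w', G.Adj a b)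

/-- `H` is a proper minor of `G`. -/
def IsProperMinor {W V : Type} (H : SimpleGraph W) (G : SimpleGraph V) : Prop :=
  IsMinor H G ∧ ¬ IsMinor G H

/-- `G` is `k`-contraction-critical: its chromatic number is `k`, but every proper minor
is `(k-1)`-colorable. -/
def ContractionCritical {V : Type} (k : ℕ) (G : SimpleGraph V) : Prop :=
  G.chromaticNumber = (k : ENat) ∧
  ∀ (W : Type) (H : SimpleGraph W), IsProperMinor H G → H.Colorable (k - 1)

/-- `G` is `t`-connected: more than `t` vertices, and deleting any fewer than `t`
vertices leaves it connected. -/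
def KConnected {V : Type} [Fintype V] (G : SimpleGraph V) (t : ℕ) : Prop :=
  t < Fintype.card V ∧
  ∀ S : Finset V, S.card < t → (G.induce {v : V | v ∉ S}).Connected

/-- Independence number of the subgraph of `G` induced on `S`. -/
noncomputable def alphaOn {V : Type} (G : SimpleGraph V) (S : Set V) : ℕ :=
  sSup {n | ∃ t : Finset V, ↑t ⊆ S ∧ t.card = n ∧
    ∀ a ∈ t, ∀ b ∈ t, a ≠ b → ¬ G.Adj a b}

/-- Number of common neighbors of `a` and `b` in `G`. -/
noncomputable def commonNbrs {V : Type} (G : SimpleGraph V) (a b : V) : ℕ :=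
  {x : V | G.Adj a x ∧ G.Adj b x}.ncard


/-!
Every pair `u i, v i` is joined either by an edge or by a path `u i, w i, v i` through a
common neighbour. A non-adjacent pair has at least `3k - 1` common neighbours, of which at most
`2k - 1` are among the other terminals and `u₀`; so each of the at most `k` non-adjacent pairs
has `k` admissible midpoints, and Hall's theorem picks pairwise distinct ones.
-/

open Finset SimpleGraph

theorem exists_injective_forall_mem_of_card_le {ι α : Type*} [Fintype ι] [DecidableEq α]
    {t : ι → Finset α} (ht : ∀ i, Fintype.card ι ≤ #(t i)) :
    ∃ f : ι → α, Function.Injective f ∧ ∀ i, f i ∈ t i := by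
  refine (all_card_le_biUnion_card_iff_exists_injective t).mp fun s => ?_
  obtain rfl | ⟨i, hi⟩ := s.eq_empty_or_nonempty
  · simp
  · calc #s ≤ Fintype.card ι := card_le_univ s
      _ ≤ #(t i) := ht i
      _ ≤ #(s.biUnion t) := card_le_card (subset_biUnion_of_mem t hi)

namespace SimpleGraph

variable {V : Type} {G : SimpleGraph V}

theorem commonNbrs_eq_ncard (a b : V) : commonNbrs G a b = (G.commonNeighbors a b).ncard := rfl

theorem commonNbrs_add_two_le [Fintype V] [DecidableEq V] [DecidableRel G.Adj]
    {a b : V} {F : Finset V} (ha : a ∈ F) (hb : b ∈ F) (hab : a ≠ b) :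
    commonNbrs G a b + 2 ≤ #((G.commonNeighbors a b).toFinset \ F) + #F := by
  set C := (G.commonNeighbors a b).toFinset
  have hsub : C ⊆ (C \ F) ∪ ((F.erase a).erase b) := by
    intro x hx
    have hx' : x ∈ G.commonNeighbors a b := Set.mem_toFinset.mp hx
    have hxa : x ≠ a := by rintro rfl; exact G.notMem_commonNeighbors_left x b hx'
    have hxb : x ≠ b := by rintro rfl; exact G.notMem_commonNeighbors_right a x hx'
    by_cases hxF : x ∈ F <;> simp [hx, hxF, hxa, hxb]
  have hC : commonNbrs G a b = #C := by
    rw [commonNbrs_eq_ncard, Set.ncard_eq_toFinset_card']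
  have hF : #((F.erase a).erase b) + 2 = #F := by
    rw [card_erase_of_mem (mem_erase.mpr ⟨hab.symm, hb⟩), card_erase_of_mem ha]
    have : 1 < #F := one_lt_card.mpr ⟨a, ha, b, hb, hab⟩
    omega
  have := (card_le_card hsub).trans (card_union_le _ _)
  omega

theorem exists_injective_commonNeighbors_notMem [Fintype V] [DecidableEq V] [DecidableRel G.Adj]
    {k : ℕ} (hcommon : ∀ a b : V, a ≠ b → ¬ G.Adj a b → 3 * k - 1 ≤ commonNbrs G a b)
    {F : Finset V} (hF : #F ≤ 2 * k + 1) {u v : Fin k → V} (hu : ∀ i, u i ∈ F)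
    (hv : ∀ i, v i ∈ F) (huv : ∀ i, u i ≠ v i) :
    ∃ w : {i // ¬ G.Adj (u i) (v i)} → V, Function.Injective w ∧
      ∀ i : {i // ¬ G.Adj (u i) (v i)}, w i ∈ G.commonNeighbors (u i) (v i) ∧ w i ∉ F := by
  obtain ⟨w, hw_inj, hw⟩ := exists_injective_forall_mem_of_card_le
    (t := fun i : {i // ¬ G.Adj (u i) (v i)} => (G.commonNeighbors (u i) (v i)).toFinset \ F)
    fun i => by
      have := commonNbrs_add_two_le (G := G) (hu i.1) (hv i.1) (huv i.1)
      have := hcommon _ _ (huv i.1) i.2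
      have : Fintype.card {i // ¬ G.Adj (u i) (v i)} ≤ k :=
        (Fintype.card_subtype_le _).trans (Fintype.card_fin k).le
      omega
  exact ⟨w, hw_inj, fun i => by simpa using hw i⟩

theorem exists_isPath_of_adj_or_commonNeighbors {a b : V} (hab : a ≠ b)
    (m : ¬ G.Adj a b → V) (hm : ∀ h, m h ∈ G.commonNeighbors a b) :
    ∃ p : G.Walk a b, p.IsPath ∧ ∀ x ∈ p.support, x = a ∨ x = b ∨ ∃ h, x = m h := by
  by_cases h : G.Adj a b
  · exact ⟨h.toWalk, h.isPath_toWalk, by simp⟩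
  · obtain ⟨ham, hbm⟩ := G.mem_commonNeighbors.mp (hm h)
    refine ⟨.cons ham hbm.symm.toWalk, ?_, fun x hx => ?_⟩
    · simp [Walk.isPath_def, hab, ham.ne, hbm.ne.symm]
    · obtain rfl | rfl | rfl : x = a ∨ x = m h ∨ x = b := by simpa using hx
      exacts [.inl rfl, .inr (.inr ⟨h, rfl⟩), .inr (.inl rfl)]

end SimpleGraph

theorem stmt1_general {V : Type} [Fintype V] (k : ℕ) (L : SimpleGraph V)
    (hcommon : ∀ a b : V, a ≠ b → ¬ L.Adj a b → 3 * k - 1 ≤ commonNbrs L a b) :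
    KnittedOne L k := by
  classical
  intro u₀ u v hinj
  simp only [Sum.elim_injective, Sum.forall, Sum.elim_inl, Sum.elim_inr,
    forall_const] at hinj
  obtain ⟨⟨hu, hv, huv⟩, -, hu₀, hv₀⟩ := hinj
  set F : Finset V := insert u₀ (univ.image u ∪ univ.image v)
  have hF : #F ≤ 2 * k + 1 := by
    grw [card_insert_le, card_union_le, card_image_le, card_image_le, card_univ,
      Fintype.card_fin]
    omega
  obtain ⟨w, hw_inj, hw⟩ := exists_injective_commonNeighbors_notMem hcommon hF
    (fun i => mem_insert_of_mem (by simp)) (fun i => mem_insert_of_mem (by simp))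
    fun i => huv i i
  have hwF (i : {i // ¬ L.Adj (u i) (v i)}) :
      w i ≠ u₀ ∧ (∀ j, u j ≠ w i) ∧ ∀ j, v j ≠ w i := by
    simpa [F, not_or] using (hw i).2
  choose P hP hsupp using fun i => exists_isPath_of_adj_or_commonNeighbors (huv i i)
    (fun h => w ⟨i, h⟩) (fun h => (hw ⟨i, h⟩).1)
  refine ⟨P, hP, fun i hi => ?_, fun i j hij x hxi hxj => ?_⟩
  · have := hsupp i u₀ hi
    grind
  · have := hsupp i x hxi
    have := hsupp j x hxj
    grind

theorem stmt1 {V : Type} [Fintype V] (k : ℕ) (hk : 3 ≤ k) (L : SimpleGraph V)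
    (hcard : 2 * k + 1 ≤ Fintype.card V)
    (hcommon : ∀ a b : V, a ≠ b → ¬ L.Adj a b → 3 * k - 1 ≤ commonNbrs L a b) :
    KnittedOne L k :=
  stmt1_general k L hcommon
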